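/- arXiv:0707.0075 — 4 statements merged into one kernel-verified Lean document; each statement's English description precedes it below -/
import Mathlib

section
/- Let f : [A,B] → ℝ be C² with f' > 0 on [A,B], and suppose f'' is α-Hölder with constant H for some α ∈ (0,1]. Then there exists a constant K (depending only on bounds for f', f'' on [A,B] and on H) such that for all distinct x1, x2, x3 in [A,B] with x2 between x1 and x3, |D(x1,x2,x3;f) − 1 − (x1−x3)·f''(x2)/(2 f'(x2))| ≤ K·|x1−x3|·Δ^α, where Δ = max{x1,x2,x3} − min{x1,x2,x3} and D(x1,x2,x3;f) = ((f(x1)-f(x2))/(x1-x2)) / ((f(x2)-f(x3))/(x2-x3)). -/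
/-!
Expand both slopes at the middle point `x₂`: by Taylor's formula with the Hölder bound on `f''`,
the slope over a step `h` is `f'(x₂) + f''(x₂) h / 2` up to an error `H Δ^α |h|`. Dividing the two
expansions, the first-order terms produce `(x₁ - x₃) f''(x₂) / (2 f'(x₂))`; the remaining terms are
controlled by a positive lower bound `m` for `f'` (compactness, and the mean value theorem for the
denominator slope) and a bound `M` for `|f''|`. The leftover quadratic term `|x₁ - x₃| Δ` is
absorbed into `|x₁ - x₃| Δ^α` because `Δ ≤ (B - A)^(1 - α) Δ^α`.
-/

/-- Ratio distortion of three points with respect to `f`. -/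
noncomputable def ratioD (f : ℝ → ℝ) (x1 x2 x3 : ℝ) : ℝ :=
  ((f x1 - f x2) / (x1 - x2)) / ((f x2 - f x3) / (x2 - x3))

open Set

theorem abs_sub_sub_mul_le_of_abs_deriv_sub_le {g g' : ℝ → ℝ} {x y c C : ℝ}
    (hg : ∀ u ∈ uIcc x y, HasDerivAt g (g' u) u) (hC : ∀ u ∈ uIcc x y, |g' u - c| ≤ C) :
    |g y - g x - c * (y - x)| ≤ C * |y - x| := by
  have hderiv : ∀ u ∈ uIcc x y, HasDerivWithinAt (fun u ↦ g u - c * u) (g' u - c) (uIcc x y) u :=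
    fun u hu ↦ ((hg u hu).sub ((hasDerivAt_id u).const_mul c)
      |>.congr_deriv (by simp)).hasDerivWithinAt
  have hmvt := (convex_uIcc x y).norm_image_sub_le_of_norm_hasDerivWithin_le hderiv hC
    left_mem_uIcc right_mem_uIcc
  rw [Real.norm_eq_abs, Real.norm_eq_abs] at hmvt
  calc |g y - g x - c * (y - x)| = |g y - c * y - (g x - c * x)| := by ring_nf
    _ ≤ C * |y - x| := hmvt

theorem abs_taylor_remainder_two_le {f f' f'' : ℝ → ℝ} {x y C : ℝ}
    (hf : ∀ u ∈ uIcc x y, HasDerivAt f (f' u) u) (hf' : ∀ u ∈ uIcc x y, HasDerivAt f' (f'' u) u)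
    (hC : ∀ u ∈ uIcc x y, |f'' u - f'' x| ≤ C) :
    |f y - f x - f' x * (y - x) - f'' x * (y - x) ^ 2 / 2| ≤ C * (y - x) ^ 2 := by
  have hC0 : 0 ≤ C := (abs_nonneg _).trans (hC x left_mem_uIcc)
  have hf'_lin : ∀ u ∈ uIcc x y, |f' u - f' x - f'' x * (u - x)| ≤ C * |y - x| := by
    intro u hu
    have hsub : uIcc x u ⊆ uIcc x y := uIcc_subset_uIcc_left hu
    calc |f' u - f' x - f'' x * (u - x)| ≤ C * |u - x| :=
          abs_sub_sub_mul_le_of_abs_deriv_sub_le (fun v hv ↦ hf' v (hsub hv))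
            (fun v hv ↦ hC v (hsub hv))
      _ ≤ C * |y - x| := mul_le_mul_of_nonneg_left (abs_sub_left_of_mem_uIcc hu) hC0
  have hG : ∀ u ∈ uIcc x y, HasDerivAt (fun u ↦ f u - f'' x * (u - x) ^ 2 / 2)
      (f' u - f'' x * (u - x)) u := by
    intro u hu
    have hsq := ((hasDerivAt_id u).sub_const x).pow 2
    exact ((hf u hu).sub ((hsq.const_mul (f'' x)).div_const 2)).congr_deriv (by simp; ring)
  have hmvt := abs_sub_sub_mul_le_of_abs_deriv_sub_le hG
    (fun u hu ↦ by simpa only [sub_right_comm] using hf'_lin u hu)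
  calc |f y - f x - f' x * (y - x) - f'' x * (y - x) ^ 2 / 2|
      = |f y - f'' x * (y - x) ^ 2 / 2 - (f x - f'' x * (x - x) ^ 2 / 2) - f' x * (y - x)| := by
        ring_nf
    _ ≤ C * |y - x| * |y - x| := hmvt
    _ = C * (y - x) ^ 2 := by rw [mul_assoc, abs_mul_abs_self, sq]

theorem abs_slope_sub_le_of_holder {f f' f'' : ℝ → ℝ} {s : Set ℝ} [s.OrdConnected]
    {α H t x y : ℝ} (hα : 0 ≤ α) (hH : 0 ≤ H)
    (hf : ∀ u ∈ s, HasDerivAt f (f' u) u) (hf' : ∀ u ∈ s, HasDerivAt f' (f'' u) u)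
    (hHolder : ∀ u ∈ s, ∀ v ∈ s, |f'' u - f'' v| ≤ H * |u - v| ^ α)
    (hx : x ∈ s) (hy : y ∈ s) (hxy : x ≠ y) (ht : |y - x| ≤ t) :
    |slope f x y - f' x - f'' x * (y - x) / 2| ≤ H * t ^ α * |y - x| := by
  have hsub : uIcc x y ⊆ s := OrdConnected.uIcc_subset ‹_› hx hy
  have hosc : ∀ u ∈ uIcc x y, |f'' u - f'' x| ≤ H * t ^ α := fun u hu ↦
    (hHolder u (hsub hu) x hx).trans <| by
      gcongr
      exact (abs_sub_left_of_mem_uIcc hu).trans ht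
  have htaylor := abs_taylor_remainder_two_le (fun u hu ↦ hf u (hsub hu))
    (fun u hu ↦ hf' u (hsub hu)) hosc
  have hyx : y - x ≠ 0 := sub_ne_zero.2 hxy.symm
  calc |slope f x y - f' x - f'' x * (y - x) / 2|
      = |f y - f x - f' x * (y - x) - f'' x * (y - x) ^ 2 / 2| / |y - x| := by
        rw [slope_def_field, ← abs_div]
        congr 1
        field_simp
    _ ≤ H * t ^ α * (y - x) ^ 2 / |y - x| := by gcongr
    _ = H * t ^ α * |y - x| := by rw [← sq_abs]; field_simp

theorem le_slope_of_le_deriv {f f' : ℝ → ℝ} {s : Set ℝ} [s.OrdConnected] {m x y : ℝ}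
    (hf : ∀ u ∈ s, HasDerivAt f (f' u) u) (hm : ∀ u ∈ s, m ≤ f' u)
    (hx : x ∈ s) (hy : y ∈ s) (hxy : x ≠ y) : m ≤ slope f x y := by
  wlog hlt : x < y generalizing x y
  · rw [slope_comm]
    exact this hy hx hxy.symm (lt_of_le_of_ne (not_lt.1 hlt) hxy.symm)
  have hsub : Icc x y ⊆ s := OrdConnected.out ‹_› hx hy
  obtain ⟨c, hc, hslope⟩ := exists_hasDerivAt_eq_slope f f' hlt
    (HasDerivAt.continuousOn fun u hu ↦ hf u (hsub hu))
    (fun u hu ↦ hf u (hsub (Ioo_subset_Icc_self hu)))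
  rw [slope_def_field, ← hslope]
  exact hm c (hsub (Ioo_subset_Icc_self hc))

theorem abs_sub_add_abs_sub_eq_of_mem_uIcc {a b c : ℝ} (hb : b ∈ uIcc a c) :
    |a - b| + |c - b| = |a - c| := by
  rcases mem_uIcc.1 hb with ⟨h1, h2⟩ | ⟨h1, h2⟩
  · rw [abs_of_nonpos (by linarith), abs_of_nonneg (by linarith), abs_of_nonpos (by linarith)]
    ring
  · rw [abs_of_nonneg (by linarith), abs_of_nonpos (by linarith), abs_of_nonneg (by linarith)]
    ring

theorem max_max_sub_min_min_eq_abs_of_mem_uIcc {a b c : ℝ} (hb : b ∈ uIcc a c) :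
    max a (max b c) - min a (min b c) = |a - c| := by
  rcases mem_uIcc.1 hb with ⟨h1, h2⟩ | ⟨h1, h2⟩
  · rw [max_eq_right h2, max_eq_right (h1.trans h2), min_eq_left h2, min_eq_left h1,
      abs_sub_comm, abs_of_nonneg (by linarith)]
  · rw [max_eq_left h1, max_eq_left h2, min_eq_right h1, min_eq_right (h1.trans h2),
      abs_of_nonneg (by linarith)]

theorem abs_div_sub_one_sub_mul_div_le {S₁ S₂ d c a b ε m M : ℝ} (hm : 0 < m) (hd : m ≤ d)
    (hS₂ : m ≤ S₂) (hc : |c| ≤ M) (hε : 0 ≤ ε) (hab : |a| + |b| = |a - b|)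
    (h₁ : |S₁ - d - c * a / 2| ≤ ε * |a|) (h₂ : |S₂ - d - c * b / 2| ≤ ε * |b|) :
    |S₁ / S₂ - 1 - (a - b) * (c / (2 * d))| ≤
      (M * (M / 2 + ε) * |a - b| / (2 * m) + ε) * |a - b| / m := by
  have hd0 : 0 < d := hm.trans_le hd
  have hS₂0 : 0 < S₂ := hm.trans_le hS₂
  have hM : 0 ≤ M := (abs_nonneg c).trans hc
  have hb : |b| ≤ |a - b| := by linarith [abs_nonneg a]
  have hdS : |d - S₂| ≤ (M / 2 + ε) * |a - b| :=
    calc |d - S₂| = |(S₂ - d - c * b / 2) + c * b / 2| := by rw [abs_sub_comm]; ring_nf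
      _ ≤ ε * |b| + |c| * |b| / 2 := by
          grw [abs_add_le, h₂, abs_div, abs_mul, abs_two]
      _ = (|c| / 2 + ε) * |b| := by ring
      _ ≤ (M / 2 + ε) * |a - b| := by gcongr
  have hr : |(S₁ - d - c * a / 2) - (S₂ - d - c * b / 2)| ≤ ε * |a - b| := by
    grw [abs_sub, h₁, h₂, ← hab, mul_add]
  have hnum : |c * (a - b) * (d - S₂) / (2 * d)| ≤
      M * (M / 2 + ε) * |a - b| * |a - b| / (2 * m) :=
    calc |c * (a - b) * (d - S₂) / (2 * d)| = |c| * |a - b| * |d - S₂| / (2 * d) := by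
          rw [abs_div, abs_mul, abs_mul, abs_of_pos (by linarith : (0 : ℝ) < 2 * d)]
      _ ≤ M * |a - b| * ((M / 2 + ε) * |a - b|) / (2 * m) := by gcongr
      _ = M * (M / 2 + ε) * |a - b| * |a - b| / (2 * m) := by ring
  -- `S₁ - S₂ = c (a - b) / 2 + (r₁ - r₂)` with the two Taylor remainders `rᵢ`; dividing by `S₂`
  -- instead of `d` costs the factor `d - S₂`.
  have hkey : S₁ / S₂ - 1 - (a - b) * (c / (2 * d)) =
      (c * (a - b) * (d - S₂) / (2 * d) + ((S₁ - d - c * a / 2) - (S₂ - d - c * b / 2))) / S₂ := by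
    field_simp
    ring
  calc |S₁ / S₂ - 1 - (a - b) * (c / (2 * d))|
      ≤ (M * (M / 2 + ε) * |a - b| * |a - b| / (2 * m) + ε * |a - b|) / S₂ := by
        rw [hkey, abs_div, abs_of_pos hS₂0]
        grw [abs_add_le, hnum, hr]
    _ ≤ (M * (M / 2 + ε) * |a - b| * |a - b| / (2 * m) + ε * |a - b|) / m := by gcongr
    _ = (M * (M / 2 + ε) * |a - b| / (2 * m) + ε) * |a - b| / m := by ring

theorem self_le_rpow_one_sub_mul_rpow {t L α : ℝ} (ht : 0 ≤ t) (htL : t ≤ L) (hα : α ≤ 1) :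
    t ≤ L ^ (1 - α) * t ^ α :=
  calc t = t ^ (1 - α) * t ^ α := by
        rw [← Real.rpow_add' ht (by simp), sub_add_cancel, Real.rpow_one]
    _ ≤ L ^ (1 - α) * t ^ α := by gcongr

theorem ratioD_eq_slope_div_slope (f : ℝ → ℝ) (x₁ x₂ x₃ : ℝ) :
    ratioD f x₁ x₂ x₃ = slope f x₂ x₁ / slope f x₂ x₃ := by
  rw [ratioD, slope_def_field, slope_def_field, ← neg_sub (f x₂) (f x₃), ← neg_sub x₂ x₃,
    neg_div_neg_eq]

theorem ratioD_middle_estimate_general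
    (A B : ℝ) (f f' f'' : ℝ → ℝ) (α H : ℝ) (hα : α ∈ Set.Ioc (0:ℝ) 1)
    (hH : 0 ≤ H)
    (hd1 : ∀ x ∈ Set.Icc A B, HasDerivAt f (f' x) x)
    (hd2 : ∀ x ∈ Set.Icc A B, HasDerivAt f' (f'' x) x)
    (hcont : ContinuousOn f'' (Set.Icc A B))
    (hpos : ∀ x ∈ Set.Icc A B, 0 < f' x)
    (hHolder : ∀ x ∈ Set.Icc A B, ∀ y ∈ Set.Icc A B, |f'' x - f'' y| ≤ H * |x - y| ^ α) :
    ∃ K > 0, ∀ x1 ∈ Set.Icc A B, ∀ x2 ∈ Set.Icc A B, ∀ x3 ∈ Set.Icc A B,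
      x1 ≠ x2 → x2 ≠ x3 → x1 ≠ x3 →
      (min x1 x3 < x2 ∧ x2 < max x1 x3) →
      |ratioD f x1 x2 x3 - 1 - (x1 - x3) * (f'' x2 / (2 * f' x2))| ≤
        K * |x1 - x3| * (max x1 (max x2 x3) - min x1 (min x2 x3)) ^ α := by
  obtain ⟨m, hm, hf'm⟩ := isCompact_Icc.exists_forall_le' (HasDerivAt.continuousOn hd2) hpos
  obtain ⟨M, hM⟩ := isCompact_Icc.exists_bound_of_continuousOn hcont
  set K₀ := (M * (M / 2 + H * (B - A) ^ α) * (B - A) ^ (1 - α) / (2 * m) + H) / m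
  refine ⟨max K₀ 1, lt_max_of_lt_right one_pos, ?_⟩
  intro x1 h1 x2 h2 x3 h3 h12 h23 _ hbet
  have hα0 : 0 ≤ α := hα.1.le
  have hmem : x2 ∈ uIcc x1 x3 := ⟨hbet.1.le, hbet.2.le⟩
  set t := |x1 - x3|
  have htL : t ≤ B - A := abs_sub_le_iff.2 ⟨by linarith [h1.2, h3.1], by linarith [h1.1, h3.2]⟩
  have hsum : |x1 - x2| + |x3 - x2| = t := abs_sub_add_abs_sub_eq_of_mem_uIcc hmem
  have hS₁ := abs_slope_sub_le_of_holder hα0 hH hd1 hd2 hHolder h2 h1 h12.symm (t := t)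
    (by linarith [abs_nonneg (x3 - x2)])
  have hS₂ := abs_slope_sub_le_of_holder hα0 hH hd1 hd2 hHolder h2 h3 h23 (t := t)
    (by linarith [abs_nonneg (x1 - x2)])
  have hE := abs_div_sub_one_sub_mul_div_le hm (hf'm x2 h2)
    (le_slope_of_le_deriv hd1 hf'm h2 h3 h23) (hM x2 h2) (by positivity)
    (by rwa [sub_sub_sub_cancel_right]) hS₁ hS₂
  rw [sub_sub_sub_cancel_right] at hE
  rw [ratioD_eq_slope_div_slope, max_max_sub_min_min_eq_abs_of_mem_uIcc hmem]
  have hM0 : 0 ≤ M := (norm_nonneg _).trans (hM x2 h2)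
  have hBA : 0 ≤ B - A := (abs_nonneg _).trans htL
  have ht : t ≤ (B - A) ^ (1 - α) * t ^ α := self_le_rpow_one_sub_mul_rpow (abs_nonneg _) htL hα.2
  calc _ ≤ _ := hE
    _ ≤ (M * (M / 2 + H * (B - A) ^ α) * ((B - A) ^ (1 - α) * t ^ α) / (2 * m) + H * t ^ α)
          * t / m := by gcongr
    _ = K₀ * t * t ^ α := by ring
    _ ≤ max K₀ 1 * t * t ^ α := by gcongr; exact le_max_left _ _

theorem ratioD_middle_estimate
    (A B : ℝ) (hAB : A < B) (f f' f'' : ℝ → ℝ) (α H : ℝ) (hα : α ∈ Set.Ioc (0:ℝ) 1)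
    (hH : 0 ≤ H)
    (hd1 : ∀ x ∈ Set.Icc A B, HasDerivAt f (f' x) x)
    (hd2 : ∀ x ∈ Set.Icc A B, HasDerivAt f' (f'' x) x)
    (hcont : ContinuousOn f'' (Set.Icc A B))
    (hpos : ∀ x ∈ Set.Icc A B, 0 < f' x)
    (hHolder : ∀ x ∈ Set.Icc A B, ∀ y ∈ Set.Icc A B, |f'' x - f'' y| ≤ H * |x - y| ^ α) :
    ∃ K > 0, ∀ x1 ∈ Set.Icc A B, ∀ x2 ∈ Set.Icc A B, ∀ x3 ∈ Set.Icc A B,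
      x1 ≠ x2 → x2 ≠ x3 → x1 ≠ x3 →
      (min x1 x3 < x2 ∧ x2 < max x1 x3) →
      |ratioD f x1 x2 x3 - 1 - (x1 - x3) * (f'' x2 / (2 * f' x2))| ≤
        K * |x1 - x3| * (max x1 (max x2 x3) - min x1 (min x2 x3)) ^ α :=
  ratioD_middle_estimate_general A B f f' f'' α H hα hH hd1 hd2 hcont hpos hHolder
end

section
/- Let f : [A,B] → ℝ be C¹ with 0 < m ≤ f' ≤ M on [A,B], and suppose |f'(x) − f'(y)| ≤ L|x−y| for all x,y. Then there exists a constant C (depending on m, M, L, B−A) such that for all pairwise distinct x1, x2, x3 ∈ [A,B], |log D(x1,x2,x3;f)| ≤ C·|x1 − x3|. -/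
section Aux

variable (A B : ℝ) (f f' : ℝ → ℝ)

lemma mem_of_unit (hx : x ∈ Set.Icc A B) (hy : y ∈ Set.Icc A B)
    (ht : t ∈ Set.Icc (0:ℝ) 1) : y + t * (x - y) ∈ Set.Icc A B := by
  have := (convex_Icc A B).add_smul_sub_mem hy hx ht
  simpa using this

lemma slope_integral (hd1 : ∀ x ∈ Set.Icc A B, HasDerivAt f (f' x) x)
    (hcont : ContinuousOn f' (Set.Icc A B))
    (hx : x ∈ Set.Icc A B) (hy : y ∈ Set.Icc A B) :
    f x - f y = (∫ t in (0:ℝ)..1, f' (y + t * (x - y))) * (x - y) := by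
  have hmem : ∀ t ∈ Set.Icc (0:ℝ) 1, y + t * (x - y) ∈ Set.Icc A B := by
    intro t ht; exact mem_of_unit A B hx hy ht
  have hco : ContinuousOn (fun t : ℝ => f' (y + t * (x - y))) (Set.Icc 0 1) := by
    apply hcont.comp (Continuous.continuousOn (by continuity)) hmem
  have hint : IntervalIntegrable (fun t : ℝ => f' (y + t * (x - y)) * (x - y))
      MeasureTheory.volume 0 1 := by
    apply ContinuousOn.intervalIntegrable
    rw [Set.uIcc_of_le (by norm_num : (0:ℝ) ≤ 1)]
    exact hco.mul continuousOn_const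
  have hderiv : ∀ t ∈ Set.uIcc (0:ℝ) 1,
      HasDerivAt (fun t : ℝ => f (y + t * (x - y))) (f' (y + t * (x - y)) * (x - y)) t := by
    intro t ht
    rw [Set.uIcc_of_le (by norm_num : (0:ℝ) ≤ 1)] at ht
    have hg : HasDerivAt (fun t : ℝ => y + t * (x - y)) (x - y) t := by
      simpa using ((hasDerivAt_id t).mul_const (x - y)).const_add y
    exact (hd1 _ (hmem t ht)).comp t hg
  have := intervalIntegral.integral_eq_sub_of_hasDerivAt hderiv hint
  rw [intervalIntegral.integral_mul_const] at this
  simpa using this.symm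

end Aux

lemma log_lip {m a b : ℝ} (hm : 0 < m) (ha : m ≤ a) (hb : m ≤ b) :
    |Real.log a - Real.log b| ≤ |a - b| / m := by
  have hap : 0 < a := lt_of_lt_of_le hm ha
  have hbp : 0 < b := lt_of_lt_of_le hm hb
  have key : ∀ u v : ℝ, m ≤ u → m ≤ v → Real.log u - Real.log v ≤ |u - v| / m := by
    intro u v hu hv
    have hup : 0 < u := lt_of_lt_of_le hm hu
    have hvp : 0 < v := lt_of_lt_of_le hm hv
    have h1 : Real.log u - Real.log v = Real.log (u / v) := (Real.log_div hup.ne' hvp.ne').symm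
    rw [h1]
    have h2 : Real.log (u / v) ≤ u / v - 1 := Real.log_le_sub_one_of_pos (by positivity)
    have h3 : u / v - 1 = (u - v) / v := by field_simp
    have h4 : (u - v) / v ≤ |u - v| / m := by
      rcases le_or_gt u v with h | h
      · have : (u - v) / v ≤ 0 := div_nonpos_of_nonpos_of_nonneg (by linarith) hvp.le
        exact this.trans (by positivity)
      · have : (u - v) / v ≤ (u - v) / m := by
          apply div_le_div_of_nonneg_left (by linarith) hm hv
        calc (u-v)/v ≤ (u-v)/m := this
          _ ≤ |u-v|/m := by gcongr; exact le_abs_self _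
    linarith [h2, h4, h3.le, h3.ge]
  rw [abs_sub_le_iff]
  constructor
  · exact key a b ha hb
  · have := key b a hb ha
    rwa [abs_sub_comm] at this

theorem log_ratioD_estimate
    (A B : ℝ) (hAB : A < B) (f f' : ℝ → ℝ) (m M L : ℝ)
    (hm : 0 < m) (hmM : m ≤ M) (hL : 0 ≤ L)
    (hd1 : ∀ x ∈ Set.Icc A B, HasDerivAt f (f' x) x)
    (hbound : ∀ x ∈ Set.Icc A B, m ≤ f' x ∧ f' x ≤ M)
    (hLip : ∀ x ∈ Set.Icc A B, ∀ y ∈ Set.Icc A B, |f' x - f' y| ≤ L * |x - y|) :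
    ∃ C > 0, ∀ x1 ∈ Set.Icc A B, ∀ x2 ∈ Set.Icc A B, ∀ x3 ∈ Set.Icc A B,
      x1 ≠ x2 → x2 ≠ x3 → x1 ≠ x3 →
      |Real.log (ratioD f x1 x2 x3)| ≤ C * |x1 - x3| := by
  have hcont : ContinuousOn f' (Set.Icc A B) := by
    have hlip : LipschitzOnWith (Real.toNNReal L) f' (Set.Icc A B) := by
      apply LipschitzOnWith.of_dist_le_mul
      intro x hx y hy
      rw [Real.dist_eq, Real.dist_eq, Real.coe_toNNReal L hL]
      exact hLip x hx y hy
    exact hlip.continuousOn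
  refine ⟨L / m + 1, by positivity, ?_⟩
  intro x1 h1 x2 h2 x3 h3 h12 h23 h13
  set g1 : ℝ → ℝ := fun t => f' (x2 + t * (x1 - x2)) with hg1
  set g3 : ℝ → ℝ := fun t => f' (x2 + t * (x3 - x2)) with hg3
  have hco1 : ContinuousOn g1 (Set.Icc 0 1) :=
    hcont.comp (Continuous.continuousOn (by continuity))
      (fun t ht => mem_of_unit A B h1 h2 ht)
  have hco3 : ContinuousOn g3 (Set.Icc 0 1) :=
    hcont.comp (Continuous.continuousOn (by continuity))
      (fun t ht => mem_of_unit A B h3 h2 ht)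
  have hint1 : IntervalIntegrable g1 MeasureTheory.volume 0 1 := by
    apply ContinuousOn.intervalIntegrable
    rwa [Set.uIcc_of_le (by norm_num : (0:ℝ) ≤ 1)]
  have hint3 : IntervalIntegrable g3 MeasureTheory.volume 0 1 := by
    apply ContinuousOn.intervalIntegrable
    rwa [Set.uIcc_of_le (by norm_num : (0:ℝ) ≤ 1)]
  set I1 : ℝ := ∫ t in (0:ℝ)..1, g1 t with hI1
  set I3 : ℝ := ∫ t in (0:ℝ)..1, g3 t with hI3
  have hs1 : f x1 - f x2 = I1 * (x1 - x2) := slope_integral A B f f' hd1 hcont h1 h2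
  have hs3 : f x3 - f x2 = I3 * (x3 - x2) := slope_integral A B f f' hd1 hcont h3 h2
  have hmI : ∀ (g : ℝ → ℝ), IntervalIntegrable g MeasureTheory.volume 0 1 →
      (∀ t ∈ Set.Icc (0:ℝ) 1, m ≤ g t) → m ≤ ∫ t in (0:ℝ)..1, g t := by
    intro g hgint hge
    have : ∫ t in (0:ℝ)..1, m ≤ ∫ t in (0:ℝ)..1, g t :=
      intervalIntegral.integral_mono_on (by norm_num) intervalIntegrable_const hgint hge
    simpa using this
  have hm1 : m ≤ I1 := hmI g1 hint1 (fun t ht => (hbound _ (mem_of_unit A B h1 h2 ht)).1)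
  have hm3 : m ≤ I3 := hmI g3 hint3 (fun t ht => (hbound _ (mem_of_unit A B h3 h2 ht)).1)
  have hratio : ratioD f x1 x2 x3 = I1 / I3 := by
    unfold ratioD
    rw [show f x2 - f x3 = I3 * (x2 - x3) by linarith [hs3], hs1,
      mul_div_cancel_right₀ _ (sub_ne_zero.2 h12), mul_div_cancel_right₀ _ (sub_ne_zero.2 h23)]
  have hdiff : |I1 - I3| ≤ L * |x1 - x3| := by
    have heq : I1 - I3 = ∫ t in (0:ℝ)..1, (g1 t - g3 t) :=
      (intervalIntegral.integral_sub hint1 hint3).symm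
    rw [heq]
    have := intervalIntegral.norm_integral_le_of_norm_le_const
      (C := L * |x1 - x3|) (f := fun t => g1 t - g3 t) (a := (0:ℝ)) (b := 1) ?_
    · simpa using this
    · intro t ht
      rw [Set.uIoc_of_le (by norm_num : (0:ℝ) ≤ 1)] at ht
      have ht' : t ∈ Set.Icc (0:ℝ) 1 := ⟨ht.1.le, ht.2⟩
      have := hLip _ (mem_of_unit A B h1 h2 ht') _ (mem_of_unit A B h3 h2 ht')
      have harg : (x2 + t * (x1 - x2)) - (x2 + t * (x3 - x2)) = t * (x1 - x3) := by ring
      rw [harg] at this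
      simp only [Real.norm_eq_abs]
      calc |g1 t - g3 t| ≤ L * |t * (x1 - x3)| := this
        _ = L * (|t| * |x1 - x3|) := by rw [abs_mul]
        _ ≤ L * (1 * |x1 - x3|) := by
            gcongr
            rw [abs_of_nonneg ht.1.le]; exact ht.2
        _ = L * |x1 - x3| := by ring
  have hI1p : 0 < I1 := lt_of_lt_of_le hm hm1
  have hI3p : 0 < I3 := lt_of_lt_of_le hm hm3
  rw [hratio, Real.log_div hI1p.ne' hI3p.ne']
  calc |Real.log I1 - Real.log I3| ≤ |I1 - I3| / m := log_lip hm hm1 hm3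
    _ ≤ (L * |x1 - x3|) / m := by gcongr
    _ = (L / m) * |x1 - x3| := by ring
    _ ≤ (L / m + 1) * |x1 - x3| := by
        have : (0:ℝ) ≤ |x1 - x3| := abs_nonneg _
        nlinarith
end

section
/- Let T be a C^{2+α} orientation-preserving circle diffeomorphism with irrational rotation number, let ξ_i = T^i ξ_0, and let Δ^{(n)}_i be the n-th fundamental arcs. Then there is a constant C such that for all n, m ≥ 0 and all 0 ≤ i ≤ j < i + q_{n+1}, one has C^{-1} ≤ (|Δ^{(n+m)}_j|·|Δ^{(n)}_i|)/(|Δ^{(n+m)}_i|·|Δ^{(n)}_j|) ≤ C. (Comparability of ratios of fundamental arc lengths along a trajectory within one fundamental period.) -/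
/-!
Put `y = f^i x₀` and `A N = f^(q N) y - p N`, so that `|Δ^{(N)}_{i+t}| = |f^t (A N) - f^t y|`.
By the mean value theorem, `|Δ^{(N)}_j| / |Δ^{(N)}_i|` is a product of `f'` along the first
`j - i` points of the orbit of some point between `y` and `A N`. For `N = n + m` and `N = n`
both points lie in the arc between `A (n + 1)` and `A n`: the orbit of `f` is ordered like that
of the rotation by `ρ`, and consecutive convergents approximate `ρ` from opposite sides. The
first `q (n + 1)` images of that arc are covered by the fundamental arcs of levels `n` and
`n + 1`, which are disjoint modulo `1` by the best approximation property of convergents, so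
their total length is at most `4`. Since `log f'` is Lipschitz (by the Hölder bound on `f''`),
the logarithms of the two products differ by at most `4 Lip(log f')`.
-/

open Filter Real

open MeasureTheory in
theorem sum_sub_le_of_pairwiseDisjoint_Ioo {ι : Type*} (s : Finset ι) {c d : ι → ℝ} {a b : ℝ}
    (hab : a ≤ b) (hc : ∀ t ∈ s, a ≤ c t) (hd : ∀ t ∈ s, d t ≤ b) (hcd : ∀ t ∈ s, c t ≤ d t)
    (hdisj : (s : Set ι).PairwiseDisjoint fun t => Set.Ioo (c t) (d t)) :
    ∑ t ∈ s, (d t - c t) ≤ b - a := by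
  have hsub : (⋃ t ∈ s, Set.Ioo (c t) (d t)) ⊆ Set.Icc a b := by
    simp only [Set.iUnion_subset_iff]
    exact fun t ht x hx => ⟨(hc t ht).trans hx.1.le, hx.2.le.trans (hd t ht)⟩
  calc ∑ t ∈ s, (d t - c t) = ∑ t ∈ s, volume.real (Set.Ioo (c t) (d t)) :=
        Finset.sum_congr rfl fun t ht => (volume_real_Ioo_of_le (hcd t ht)).symm
    _ = volume.real (⋃ t ∈ s, Set.Ioo (c t) (d t)) :=
        (measureReal_biUnion_finset hdisj (fun _ _ => measurableSet_Ioo)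
          fun _ _ => measure_Ioo_lt_top.ne).symm
    _ ≤ volume.real (Set.Icc a b) := measureReal_mono hsub measure_Icc_lt_top.ne
    _ = b - a := volume_real_Icc_of_le hab

/-- The bound is `2` because each interval is moved into `[0, 2]` by an integer translation. -/
theorem sum_sub_le_two_of_disjoint_mod_one (s : ℕ) {c d : ℕ → ℝ}
    (hcd : ∀ t, c t ≤ d t) (hd : ∀ t, d t ≤ c t + 1)
    (hdisj : ∀ t t', t < s → t' < s → t ≠ t' → ∀ r : ℤ, d t ≤ c t' + r ∨ d t' + r ≤ c t) :
    ∑ t ∈ Finset.range s, (d t - c t) ≤ 2 := by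
  have key := sum_sub_le_of_pairwiseDisjoint_Ioo (Finset.range s) (c := fun t => c t - ⌊c t⌋)
    (d := fun t => d t - ⌊c t⌋) zero_le_two
    (fun t _ => sub_nonneg.2 (Int.floor_le _))
    (fun t _ => by linarith [hd t, Int.lt_floor_add_one (c t)])
    (fun t _ => by linarith [hcd t]) ?_
  · simpa only [sub_sub_sub_cancel_right, sub_zero] using key
  intro t ht t' ht' htt'
  rw [Function.onFun, Set.Ioo_disjoint_Ioo, min_le_iff, le_max_iff, le_max_iff]
  rcases hdisj t t' (Finset.mem_range.1 ht) (Finset.mem_range.1 ht') htt' (⌊c t⌋ - ⌊c t'⌋)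
    with h | h <;> push_cast at h
  · left; right; linarith
  · right; left; linarith

theorem periodic_of_hasDerivAt_of_map_add {f f' : ℝ → ℝ} {c d : ℝ}
    (hf : ∀ x, f (x + c) = f x + d) (hf' : ∀ x, HasDerivAt f (f' x) x) :
    Function.Periodic f' c := fun x => by
  have hshift : HasDerivAt (fun y => f (y + c)) (f' (x + c)) x :=
    (hf' (x + c)).comp_add_const x c
  simp only [hf] at hshift
  exact hshift.unique ((hf' x).add_const d)

theorem Function.Periodic.exists_pos_forall_le {f : ℝ → ℝ} {c : ℝ} (hp : Function.Periodic f c)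
    (hc : c ≠ 0) (hcont : Continuous f) (hpos : ∀ x, 0 < f x) : ∃ ε > 0, ∀ x, ε ≤ f x := by
  obtain ⟨_, ⟨x₀, rfl⟩, hmin⟩ :=
    (hp.compact_of_continuous hc hcont).exists_isLeast (Set.range_nonempty f)
  exact ⟨f x₀, hpos x₀, fun x => hmin ⟨x, rfl⟩⟩

theorem Function.Periodic.abs_le_of_holder {f : ℝ → ℝ} {α H : ℝ} (hp : Function.Periodic f 1)
    (hα : 0 ≤ α) (hH : 0 ≤ H) (hf : ∀ x y, |f x - f y| ≤ H * |x - y| ^ α) (x : ℝ) :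
    |f x| ≤ |f 0| + H := by
  obtain ⟨y, ⟨hy0, hy1⟩, hxy⟩ := hp.exists_mem_Ico₀ one_pos x
  rw [hxy]
  have hyα : |y - 0| ^ α ≤ 1 :=
    rpow_le_one (abs_nonneg _) (by rw [sub_zero, abs_of_nonneg hy0]; exact hy1.le) hα
  nlinarith [abs_sub_abs_le_abs_sub (f y) (f 0), hf y 0]

theorem exists_lipschitzWith_log_deriv {L dL ddL : ℝ → ℝ} {α H : ℝ}
    (hL : ∀ x, L (x + 1) = L x + 1) (hdL : ∀ x, HasDerivAt L (dL x) x)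
    (hddL : ∀ x, HasDerivAt dL (ddL x) x) (hpos : ∀ x, 0 < dL x) (hα : 0 ≤ α) (hH : 0 ≤ H)
    (hHolder : ∀ x y, |ddL x - ddL y| ≤ H * |x - y| ^ α) :
    ∃ K, LipschitzWith K fun x => log (dL x) := by
  have hdp : Function.Periodic dL 1 := periodic_of_hasDerivAt_of_map_add hL hdL
  have hddp : Function.Periodic ddL 1 :=
    periodic_of_hasDerivAt_of_map_add (d := 0) (by simpa using hdp) hddL
  obtain ⟨ε, hε, hεle⟩ := hdp.exists_pos_forall_le one_ne_zero
    (continuous_iff_continuousAt.2 fun x => (hddL x).continuousAt) hpos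
  have hbound : ∀ x, ‖ddL x / dL x‖ ≤ (|ddL 0| + H) / ε := fun x => by
    rw [norm_div, norm_of_nonneg (hpos x).le]
    exact div_le_div₀ (by positivity) (hddp.abs_le_of_holder hα hH hHolder x) hε (hεle x)
  refine ⟨_, LipschitzWith.of_dist_le' (K := (|ddL 0| + H) / ε) fun x y => ?_⟩
  simpa only [dist_eq_norm] using convex_univ.norm_image_sub_le_of_norm_hasDerivWithin_le
    (fun z _ => ((hddL z).log (hpos z).ne').hasDerivWithinAt) (fun z _ => hbound z)
    (Set.mem_univ y) (Set.mem_univ x)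

theorem inv_exp_le_and_le_exp_of_abs_log_le {x C : ℝ} (hx : 0 < x) (h : |log x| ≤ C) :
    (exp C)⁻¹ ≤ x ∧ x ≤ exp C := by
  rw [abs_le] at h
  rw [← exp_neg, ← Real.le_log_iff_exp_le hx, ← Real.log_le_iff_le_exp hx]
  exact ⟨by linarith, h.2⟩

section Distortion

variable {g dg : ℝ → ℝ}

theorem hasDerivAt_iterate_prod (hg : ∀ x, HasDerivAt g (dg x) x) (s : ℕ) (x : ℝ) :
    HasDerivAt g^[s] (∏ t ∈ Finset.range s, dg (g^[t] x)) x := by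
  induction s with
  | zero => simpa using hasDerivAt_id x
  | succ s ih =>
    rw [Finset.prod_range_succ, mul_comm, Function.iterate_succ']
    exact (hg _).comp x ih

theorem exists_mem_uIcc_abs_iterate_sub_div_eq_prod (hg : ∀ x, HasDerivAt g (dg x) x)
    (hpos : ∀ x, 0 < dg x) (s : ℕ) {w z : ℝ} (hwz : w ≠ z) :
    ∃ c ∈ Set.uIcc w z, |g^[s] z - g^[s] w| / |z - w| = ∏ t ∈ Finset.range s, dg (g^[t] c) := by
  wlog hlt : w < z generalizing w z
  · obtain ⟨c, hc, heq⟩ := this hwz.symm (lt_of_le_of_ne (not_lt.1 hlt) hwz.symm)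
    exact ⟨c, Set.uIcc_comm z w ▸ hc, by rwa [abs_sub_comm, abs_sub_comm z]⟩
  obtain ⟨c, hc, heq⟩ := exists_hasDerivAt_eq_slope g^[s] _ hlt
    (fun x _ => (hasDerivAt_iterate_prod hg s x).continuousAt.continuousWithinAt)
    (fun x _ => hasDerivAt_iterate_prod hg s x)
  refine ⟨c, Set.Icc_subset_uIcc (Set.Ioo_subset_Icc_self hc), ?_⟩
  rw [← abs_div, ← heq, abs_of_pos (Finset.prod_pos fun t _ => hpos _)]

theorem abs_log_prod_sub_log_prod_le {K : NNReal} (hK : LipschitzWith K fun x => log (dg x))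
    (hpos : ∀ x, 0 < dg x) (u v : ℕ → ℝ) (s : ℕ) :
    |log (∏ t ∈ Finset.range s, dg (u t)) - log (∏ t ∈ Finset.range s, dg (v t))|
      ≤ K * ∑ t ∈ Finset.range s, |u t - v t| := by
  rw [log_prod fun t _ => (hpos _).ne', log_prod fun t _ => (hpos _).ne',
    ← Finset.sum_sub_distrib, Finset.mul_sum]
  refine (Finset.abs_sum_le_sum_abs _ _).trans (Finset.sum_le_sum fun t _ => ?_)
  simpa only [Real.dist_eq] using hK.dist_le_mul (u t) (v t)

theorem Monotone.abs_sub_le_of_mem_uIcc (hg : Monotone g) {a b c c' : ℝ}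
    (hc : c ∈ Set.uIcc a b) (hc' : c' ∈ Set.uIcc a b) : |g c - g c'| ≤ |g b - g a| :=
  Set.abs_sub_le_of_uIcc_subset_uIcc <| Set.uIcc_subset_uIcc
    (hg.image_uIcc_subset ⟨c', hc', rfl⟩) (hg.image_uIcc_subset ⟨c, hc, rfl⟩)

theorem abs_log_div_sub_log_div_iterate_le (hmono : Monotone g)
    (hg : ∀ x, HasDerivAt g (dg x) x) (hpos : ∀ x, 0 < dg x) {K : NNReal}
    (hK : LipschitzWith K fun x => log (dg x)) (s : ℕ) {a b w z w' z' : ℝ}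
    (hw : w ∈ Set.uIcc a b) (hz : z ∈ Set.uIcc a b) (hw' : w' ∈ Set.uIcc a b)
    (hz' : z' ∈ Set.uIcc a b) (hwz : w ≠ z) (hwz' : w' ≠ z') :
    |log (|g^[s] z - g^[s] w| / |z - w|) - log (|g^[s] z' - g^[s] w'| / |z' - w'|)|
      ≤ K * ∑ t ∈ Finset.range s, |g^[t] b - g^[t] a| := by
  obtain ⟨c, hc, hc_eq⟩ := exists_mem_uIcc_abs_iterate_sub_div_eq_prod hg hpos s hwz
  obtain ⟨c', hc', hc'_eq⟩ := exists_mem_uIcc_abs_iterate_sub_div_eq_prod hg hpos s hwz'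
  rw [hc_eq, hc'_eq]
  refine (abs_log_prod_sub_log_prod_le hK hpos _ _ s).trans ?_
  refine mul_le_mul_of_nonneg_left (Finset.sum_le_sum fun t _ => ?_) K.2
  exact (hmono.iterate t).abs_sub_le_of_mem_uIcc (Set.uIcc_subset_uIcc hw hz hc)
    (Set.uIcc_subset_uIcc hw' hz' hc')

end Distortion

/-- `p n / q n` are the convergents of `ρ` with partial quotients `k`: the usual recursions,
and the errors `q n * ρ - p n` alternate in sign. -/
structure IsConvergentSeq (ρ : ℝ) (k q : ℕ → ℕ) (p : ℕ → ℤ) : Prop where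
  one_le_k : ∀ n, 1 ≤ k n
  q_zero : q 0 = 1
  q_one : q 1 = k 1
  q_add_two : ∀ n, q (n + 2) = k (n + 2) * q (n + 1) + q n
  p_zero : p 0 = 0
  p_one : p 1 = 1
  p_add_two : ∀ n, p (n + 2) = (k (n + 2) : ℤ) * p (n + 1) + p n
  sign : ∀ n, 0 < (-1 : ℝ) ^ n * (q n * ρ - p n)

namespace IsConvergentSeq

variable {ρ : ℝ} {k q : ℕ → ℕ} {p : ℕ → ℤ} (h : IsConvergentSeq ρ k q p)
include h

theorem q_le_q_succ (n : ℕ) : q n ≤ q (n + 1) := by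
  cases n with
  | zero => rw [h.q_zero, h.q_one]; exact h.one_le_k 1
  | succ n => rw [h.q_add_two]; nlinarith [h.one_le_k (n + 2)]

theorem one_le_q (n : ℕ) : 1 ≤ q n := by
  induction n with
  | zero => rw [h.q_zero]
  | succ n ih => exact ih.trans (h.q_le_q_succ n)

theorem abs_err_eq (n : ℕ) : |(q n : ℝ) * ρ - p n| = (-1) ^ n * (q n * ρ - p n) := by
  rw [← abs_of_pos (h.sign n), abs_mul, abs_pow, abs_neg, abs_one, one_pow, one_mul]

theorem err_mul_err_succ_neg (n : ℕ) :
    ((q n : ℝ) * ρ - p n) * (q (n + 1) * ρ - p (n + 1)) < 0 := by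
  have := mul_pos (h.sign n) (h.sign (n + 1))
  rw [pow_succ] at this
  have hsq : (-1 : ℝ) ^ n * (-1) ^ n = 1 := by rw [← mul_pow]; norm_num
  nlinarith

theorem err_add_two (n : ℕ) : (q (n + 2) : ℝ) * ρ - p (n + 2)
    = k (n + 2) * (q (n + 1) * ρ - p (n + 1)) + (q n * ρ - p n) := by
  rw [h.q_add_two, h.p_add_two]; push_cast; ring

theorem abs_err_succ_le (n : ℕ) :
    |(q (n + 1) : ℝ) * ρ - p (n + 1)| ≤ |(q n : ℝ) * ρ - p n| := by
  have h2 := h.sign (n + 2)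
  rw [h.err_add_two, pow_succ, pow_succ] at h2
  rw [h.abs_err_eq, h.abs_err_eq, pow_succ]
  have h1 := h.sign (n + 1)
  rw [pow_succ] at h1
  have hk : (1 : ℝ) ≤ k (n + 2) := by exact_mod_cast h.one_le_k _
  nlinarith [mul_le_mul_of_nonneg_right hk h1.le]

theorem abs_err_le_of_le {m n : ℕ} (hmn : m ≤ n) :
    |(q n : ℝ) * ρ - p n| ≤ |(q m : ℝ) * ρ - p m| :=
  antitone_nat_of_succ_le (f := fun n => |(q n : ℝ) * ρ - p n|) h.abs_err_succ_le hmn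

theorem err_zero : (q 0 : ℝ) * ρ - p 0 = ρ := by simp [h.q_zero, h.p_zero]

theorem lt_one : ρ < 1 := by
  have h0 := h.sign 0
  have h1 := h.sign 1
  rw [h.err_zero] at h0
  rw [h.q_one, h.p_one] at h1
  have hk : (1 : ℝ) ≤ k 1 := by exact_mod_cast h.one_le_k 1
  push_cast at h1
  nlinarith

theorem abs_err_lt_one (n : ℕ) : |(q n : ℝ) * ρ - p n| < 1 := by
  refine (h.abs_err_le_of_le n.zero_le).trans_lt ?_
  rw [h.err_zero, abs_of_pos (by simpa [h.err_zero] using h.sign 0)]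
  exact h.lt_one

theorem determinant (n : ℕ) : p (n + 1) * (q n : ℤ) - p n * q (n + 1) = (-1) ^ n := by
  induction n with
  | zero => rw [h.p_one, h.p_zero, h.q_zero]; ring
  | succ n ih =>
    rw [h.p_add_two, h.q_add_two]
    push_cast
    linear_combination (-1 : ℤ) * ih

theorem abs_err_le_abs_mul_sub {N s : ℕ} (r : ℤ) (hs0 : 0 < s) (hs : s < q (N + 1)) :
    |(q N : ℝ) * ρ - p N| ≤ |(s : ℝ) * ρ - r| := by
  -- Write `(s, r)` in the unimodular basis `(q N, p N)`, `(q (N + 1), p (N + 1))`: the two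
  -- coefficients have opposite signs, and so have the two errors.
  set a : ℤ := (-1) ^ N * (s * p (N + 1) - r * q (N + 1))
  set b : ℤ := (-1) ^ N * (r * q N - s * p N)
  have hsq : ((-1 : ℤ) ^ N) * (-1) ^ N = 1 := by rw [← mul_pow]; norm_num
  have hq : a * q N + b * q (N + 1) = s := by
    linear_combination ((-1 : ℤ) ^ N * s) * h.determinant N + (s : ℤ) * hsq
  have hp : a * p N + b * p (N + 1) = r := by
    linear_combination ((-1 : ℤ) ^ N * r) * h.determinant N + r * hsq
  have hq0 : (1 : ℤ) ≤ q N := by exact_mod_cast h.one_le_q N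
  have hs0' : (0 : ℤ) < s := by exact_mod_cast hs0
  have hs' : (s : ℤ) < q (N + 1) := by exact_mod_cast hs
  have ha : a ≠ 0 := by
    rintro ha
    rw [ha, zero_mul, zero_add] at hq
    rcases le_or_gt b 0 with hb | hb <;> nlinarith
  have hab : a * b ≤ 0 := by
    by_contra! hab
    rcases pos_and_pos_or_neg_and_neg_of_mul_pos hab with ⟨ha', hb'⟩ | ⟨ha', hb'⟩ <;> nlinarith
  have hreal : (s : ℝ) * ρ - r = a * (q N * ρ - p N) + b * (q (N + 1) * ρ - p (N + 1)) := by
    have hq' : (a : ℝ) * q N + b * q (N + 1) = s := by exact_mod_cast hq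
    have hp' : (a : ℝ) * p N + b * p (N + 1) = r := by exact_mod_cast hp
    linear_combination ρ * hq'.symm - hp'.symm
  have hab' : ((a : ℝ) * (q N * ρ - p N)) * (b * (q (N + 1) * ρ - p (N + 1))) ≥ 0 := by
    have : (a : ℝ) * b ≤ 0 := by exact_mod_cast hab
    nlinarith [h.err_mul_err_succ_neg N]
  have ha1 : (1 : ℝ) ≤ |(a : ℝ)| := by
    rw [← Int.cast_abs]; exact_mod_cast Int.one_le_abs ha
  calc |(q N : ℝ) * ρ - p N| ≤ |(a : ℝ)| * |(q N : ℝ) * ρ - p N| :=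
        le_mul_of_one_le_left (abs_nonneg _) ha1
    _ = |(a : ℝ) * (q N * ρ - p N)| := (abs_mul _ _).symm
    _ ≤ |(s : ℝ) * ρ - r| := by rw [hreal]; exact sq_le_sq.1 (by nlinarith)

theorem mem_uIcc_of_abs_le {n : ℕ} {x : ℝ} (hx : |x| ≤ |(q (n + 1) : ℝ) * ρ - p (n + 1)|) :
    x ∈ Set.uIcc ((q (n + 1) : ℝ) * ρ - p (n + 1)) (q n * ρ - p n) := by
  have hle := h.abs_err_succ_le n
  have hneg := h.err_mul_err_succ_neg n
  rw [Set.mem_uIcc]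
  rcases lt_or_gt_of_ne (left_ne_zero_of_mul hneg.ne) with hn | hn
  · have hn1 : 0 < (q (n + 1) : ℝ) * ρ - p (n + 1) := by nlinarith
    rw [abs_of_pos hn1, abs_of_neg hn] at hle
    rw [abs_of_pos hn1] at hx
    right; constructor <;> linarith [abs_le.1 hx]
  · have hn1 : (q (n + 1) : ℝ) * ρ - p (n + 1) < 0 := by nlinarith
    rw [abs_of_neg hn1, abs_of_pos hn] at hle
    rw [abs_of_neg hn1] at hx
    left; constructor <;> linarith [abs_le.1 hx]

theorem err_add_mem_uIcc (n m : ℕ) : (q (n + m) : ℝ) * ρ - p (n + m)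
    ∈ Set.uIcc ((q (n + 1) : ℝ) * ρ - p (n + 1)) (q n * ρ - p n) := by
  rcases m.eq_zero_or_pos with rfl | hm
  · exact Set.right_mem_uIcc
  · exact h.mem_uIcc_of_abs_le (h.abs_err_le_of_le (by omega))

theorem zero_mem_uIcc (n : ℕ) :
    (0 : ℝ) ∈ Set.uIcc ((q (n + 1) : ℝ) * ρ - p (n + 1)) (q n * ρ - p n) :=
  h.mem_uIcc_of_abs_le (by rw [abs_zero]; exact abs_nonneg _)

end IsConvergentSeq

theorem Irrational.eq_of_natCast_mul_sub_intCast_eq {x : ℝ} (hx : Irrational x) {a a' : ℕ}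
    {b b' : ℤ} (h : a * x - b = a' * x - b') : a = a' ∧ b = b' := by
  have ha : a = a' := by
    by_contra ha
    have hne : ((a : ℤ) - a') ≠ 0 := sub_ne_zero.2 (by exact_mod_cast ha)
    exact (hx.intCast_mul hne).ne_int (b - b') (by push_cast; linarith)
  subst ha
  exact ⟨rfl, by exact_mod_cast (by linarith : (b : ℝ) = b')⟩

theorem abs_le_abs_sub_mul_add_of_forall_abs_le {θ ρ : ℝ} {s : ℕ}
    (h : ∀ d : ℕ, 0 < d → d < s → ∀ r : ℤ, |θ| ≤ |d * ρ - r|) {t t' : ℕ} (ht : t < s)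
    (ht' : t' < s) (hne : t ≠ t') (r : ℤ) : |θ| ≤ |((t' : ℝ) - t) * ρ + r| := by
  rcases lt_or_gt_of_ne hne with hlt | hlt
  · have e : ((t' : ℝ) - t) * ρ + r = ((t' - t : ℕ) : ℝ) * ρ - (-r : ℤ) := by
      push_cast [Nat.cast_sub hlt.le]; ring
    rw [e]; exact h (t' - t) (by omega) (by omega) (-r)
  · have e : ((t' : ℝ) - t) * ρ + r = -(((t - t' : ℕ) : ℝ) * ρ - r) := by
      push_cast [Nat.cast_sub hlt.le]; ring
    rw [e, abs_neg]; exact h (t - t') (by omega) (by omega) r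

local notation "τ" => CircleDeg1Lift.translationNumber

namespace CircleDeg1Lift

variable {f : CircleDeg1Lift}

theorem pow_apply_sub_intCast_lt (x : ℝ) {a a' : ℕ} {b b' : ℤ}
    (h : a * τ f - b < a' * τ f - b') : (f ^ a) x - b < (f ^ a') x - b' := by
  rcases le_total a a' with haa | haa
  · obtain ⟨d, rfl⟩ := Nat.exists_eq_add_of_le haa
    have hd : ((b' - b : ℤ) : ℝ) < τ (f ^ d) := by
      rw [translationNumber_pow]; push_cast at h ⊢; linarith
    have := (f ^ d).lt_map_of_int_lt_translationNumber hd ((f ^ a) x)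
    rw [add_comm a d, pow_add, mul_apply]
    push_cast at this; linarith
  · obtain ⟨d, rfl⟩ := Nat.exists_eq_add_of_le haa
    have hd : τ (f ^ d) < ((b - b' : ℤ) : ℝ) := by
      rw [translationNumber_pow]; push_cast at h ⊢; linarith
    have := (f ^ d).map_lt_of_translationNumber_lt_int hd ((f ^ a') x)
    rw [add_comm a' d, pow_add, mul_apply]
    push_cast at this; linarith

section Irrational

variable (hf : Irrational (τ f))
include hf

theorem pow_apply_sub_intCast_le_iff (x : ℝ) {a a' : ℕ} {b b' : ℤ} :
    (f ^ a) x - b ≤ (f ^ a') x - b' ↔ (a : ℝ) * τ f - b ≤ a' * τ f - b' := by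
  refine ⟨fun h => not_lt.1 fun h' => (pow_apply_sub_intCast_lt x h').not_ge h, fun h => ?_⟩
  rcases h.lt_or_eq with h | h
  · exact (pow_apply_sub_intCast_lt x h).le
  · obtain ⟨rfl, rfl⟩ := hf.eq_of_natCast_mul_sub_intCast_eq h
    exact le_rfl

theorem pow_apply_sub_intCast_mem_uIcc_iff (x : ℝ) {a a₁ a₂ : ℕ} {b b₁ b₂ : ℤ} :
    (f ^ a) x - b ∈ Set.uIcc ((f ^ a₁) x - b₁) ((f ^ a₂) x - b₂)
      ↔ (a : ℝ) * τ f - b ∈ Set.uIcc ((a₁ : ℝ) * τ f - b₁) (a₂ * τ f - b₂) := by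
  simp only [Set.mem_uIcc, pow_apply_sub_intCast_le_iff hf]

theorem abs_pow_add_apply_sub_sub_le_one (x : ℝ) (a t : ℕ) (b : ℤ) (h : |a * τ f - b| ≤ 1) :
    |(f ^ (a + t)) x - b - (f ^ t) x| ≤ 1 := by
  have h₁ := (pow_apply_sub_intCast_le_iff hf x (a := a + t) (b := b) (a' := t) (b' := -1)).2
    (by push_cast; linarith [abs_le.1 h])
  have h₂ := (pow_apply_sub_intCast_le_iff hf x (a := t) (b := 0) (a' := a + t) (b' := b - 1)).2
    (by push_cast; linarith [abs_le.1 h])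
  push_cast at h₁ h₂
  rw [abs_sub_le_iff]
  constructor <;> linarith

theorem sum_abs_pow_add_apply_sub_sub_le_two (x : ℝ) (a : ℕ) (b : ℤ) (s : ℕ)
    (hle : |a * τ f - b| ≤ 1)
    (hsep : ∀ d : ℕ, 0 < d → d < s → ∀ r : ℤ, |a * τ f - b| ≤ |d * τ f - r|) :
    ∑ t ∈ Finset.range s, |(f ^ (a + t)) x - b - (f ^ t) x| ≤ 2 := by
  set P : ℕ → ℤ → ℝ := fun c e => (f ^ c) x - e with hP
  have hPle : ∀ (c : ℕ) (e : ℤ) (c' : ℕ) (e' : ℤ),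
      (c : ℝ) * τ f - e ≤ c' * τ f - e' → P c e ≤ P c' e' :=
    fun _ _ _ _ => (pow_apply_sub_intCast_le_iff hf x).2
  have hPadd : ∀ c e (r : ℤ), P c e + r = P c (e - r) := by
    intro c e r; simp only [hP]; push_cast; ring
  have key := sum_sub_le_two_of_disjoint_mod_one s (c := fun t => min (P t 0) (P (a + t) b))
    (d := fun t => max (P t 0) (P (a + t) b)) (fun t => min_le_max) ?_ ?_
  · simpa only [max_sub_min_eq_abs, hP, Int.cast_zero, sub_zero] using key
  · intro t
    rw [← sub_le_iff_le_add', max_sub_min_eq_abs]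
    simpa only [hP, Int.cast_zero, sub_zero] using abs_pow_add_apply_sub_sub_le_one hf x a t b hle
  · intro t t' ht ht' hne r
    have hθ := abs_le_abs_sub_mul_add_of_forall_abs_le hsep ht ht' hne r
    simp only [← min_add_add_right, ← max_add_add_right, hPadd]
    -- the rotation by `τ f` separates the two arcs, and `f` orders its orbit in the same way
    rcases le_total 0 (((t' : ℝ) - t) * τ f + r) with hδ | hδ
    · rw [abs_of_nonneg hδ, abs_le] at hθ
      left
      refine max_le (le_min (hPle _ _ _ _ ?_) (hPle _ _ _ _ ?_))
        (le_min (hPle _ _ _ _ ?_) (hPle _ _ _ _ ?_)) <;> push_cast <;> linarith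
    · rw [abs_of_nonpos hδ, abs_le] at hθ
      right
      refine max_le (le_min (hPle _ _ _ _ ?_) (hPle _ _ _ _ ?_))
        (le_min (hPle _ _ _ _ ?_) (hPle _ _ _ _ ?_)) <;> push_cast <;> linarith

end Irrational

variable (f) (q : ℕ → ℕ) (p : ℕ → ℤ)

/-- `|Δ^{(n)}_i|` for the orbit of `x`. -/
def fundArcLength (x : ℝ) (n i : ℕ) : ℝ :=
  |(f ^ (q n + i)) x - (f ^ i) x - p n|

theorem fundArcLength_pow_apply (x : ℝ) (n i t : ℕ) :
    f.fundArcLength q p ((f ^ i) x) n t = f.fundArcLength q p x n (i + t) := by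
  simp only [fundArcLength, ← mul_apply, ← pow_add]
  rw [add_assoc, add_comm t i]

theorem fundArcLength_eq_abs_iterate_sub (x : ℝ) (n t : ℕ) :
    f.fundArcLength q p x n t = |(⇑f)^[t] ((f ^ q n) x - p n) - (⇑f)^[t] x| := by
  rw [fundArcLength, ← coe_pow, map_sub_int, ← mul_apply, ← pow_add, add_comm t, sub_right_comm]

variable {f q p} {k : ℕ → ℕ}

theorem fundArcLength_pos (hcv : IsConvergentSeq (τ f) k q p) (x : ℝ) (n t : ℕ) :
    0 < f.fundArcLength q p x n t := by
  have hθ : (q n : ℝ) * τ f - p n ≠ 0 := right_ne_zero_of_mul (hcv.sign n).ne'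
  rw [fundArcLength, abs_pos, sub_right_comm, sub_ne_zero]
  rcases hθ.lt_or_gt with hθ | hθ
  · have := pow_apply_sub_intCast_lt x (a := q n + t) (b := p n) (a' := t) (b' := 0)
      (by push_cast; linarith)
    simpa using this.ne
  · have := pow_apply_sub_intCast_lt x (a := t) (b := 0) (a' := q n + t) (b' := p n)
      (by push_cast; linarith)
    simpa using this.ne'

theorem sum_fundArcLength_le_two (hf : Irrational (τ f)) (hcv : IsConvergentSeq (τ f) k q p)
    (x : ℝ) (n s : ℕ) (hs : s ≤ q (n + 1)) :
    ∑ t ∈ Finset.range s, f.fundArcLength q p x n t ≤ 2 := by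
  simpa only [fundArcLength, sub_right_comm] using sum_abs_pow_add_apply_sub_sub_le_two hf x
    (q n) (p n) s (hcv.abs_err_lt_one n).le
    fun _ hd0 hds r => hcv.abs_err_le_abs_mul_sub (N := n) r hd0 (by omega)

theorem abs_log_fundArcLength_div_sub_le (hf : Irrational (τ f))
    (hcv : IsConvergentSeq (τ f) k q p) {df : ℝ → ℝ} (hderiv : ∀ x, HasDerivAt f (df x) x)
    (hpos : ∀ x, 0 < df x) {K : NNReal} (hK : LipschitzWith K fun x => log (df x))
    (x : ℝ) (n m s : ℕ) (hs : s < q (n + 1)) :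
    |log (f.fundArcLength q p x (n + m) s / f.fundArcLength q p x (n + m) 0)
      - log (f.fundArcLength q p x n s / f.fundArcLength q p x n 0)| ≤ 4 * K := by
  set A : ℕ → ℝ := fun N => (f ^ q N) x - p N
  have hx : ∀ N, x ≠ A N := fun N => by
    have := fundArcLength_pos hcv x N 0
    rw [fundArcLength_eq_abs_iterate_sub, Function.iterate_zero_apply,
      Function.iterate_zero_apply, abs_pos, sub_ne_zero] at this
    exact this.symm
  have hxmem : x ∈ Set.uIcc (A (n + 1)) (A n) := by
    simpa using (pow_apply_sub_intCast_mem_uIcc_iff hf x (a := 0) (b := 0)).2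
      (by simpa using hcv.zero_mem_uIcc n)
  have hAmem : A (n + m) ∈ Set.uIcc (A (n + 1)) (A n) :=
    (pow_apply_sub_intCast_mem_uIcc_iff hf x).2 (hcv.err_add_mem_uIcc n m)
  have hdist := abs_log_div_sub_log_div_iterate_le f.monotone hderiv hpos hK s hxmem hAmem
    hxmem Set.right_mem_uIcc (hx (n + m)) (hx n)
  have hsum : ∑ t ∈ Finset.range s, |(⇑f)^[t] (A n) - (⇑f)^[t] (A (n + 1))| ≤ 4 := calc
    _ ≤ ∑ t ∈ Finset.range s, (f.fundArcLength q p x n t + f.fundArcLength q p x (n + 1) t) :=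
        Finset.sum_le_sum fun t _ => (abs_sub_le _ ((⇑f)^[t] x) _).trans_eq <| by
          rw [fundArcLength_eq_abs_iterate_sub, fundArcLength_eq_abs_iterate_sub,
            abs_sub_comm ((⇑f)^[t] x)]
    _ ≤ 2 + 2 := by
        rw [Finset.sum_add_distrib]
        exact add_le_add (sum_fundArcLength_le_two hf hcv x n s hs.le)
          (sum_fundArcLength_le_two hf hcv x (n + 1) s (hs.le.trans (hcv.q_le_q_succ _)))
    _ = 4 := by norm_num
  simp only [fundArcLength_eq_abs_iterate_sub, Function.iterate_zero, id]
  calc _ ≤ K * ∑ t ∈ Finset.range s, |(⇑f)^[t] (A n) - (⇑f)^[t] (A (n + 1))| := hdist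
    _ ≤ K * 4 := mul_le_mul_of_nonneg_left hsum K.2
    _ = 4 * K := mul_comm _ _

end CircleDeg1Lift

theorem arc_ratio_comparable_general
    (L dL ddL : ℝ → ℝ) (hLmono : StrictMono L)
    (hLper : ∀ x, L (x + 1) = L x + 1)
    (hderiv : ∀ x, HasDerivAt L (dL x) x)
    (hderiv2 : ∀ x, HasDerivAt dL (ddL x) x)
    (hdpos : ∀ x, 0 < dL x)
    (α H : ℝ) (hα : α ∈ Set.Ioc (0:ℝ) 1) (hH : 0 ≤ H)
    (hHolder : ∀ x y : ℝ, |ddL x - ddL y| ≤ H * |x - y| ^ α)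
    (ρ : ℝ) (hirr : Irrational ρ)
    (hrot : Tendsto (fun i : ℕ => (L^[i] 0 - 0) / i) atTop (nhds ρ))
    (k q : ℕ → ℕ) (p : ℕ → ℤ)
    (hk : ∀ n, 1 ≤ k n)
    (hq0 : q 0 = 1) (hq1 : q 1 = k 1)
    (hqrec : ∀ n, q (n + 2) = k (n + 2) * q (n + 1) + q n)
    (hp0 : p 0 = 0) (hp1 : p 1 = 1)
    (hprec : ∀ n, p (n + 2) = (k (n + 2) : ℤ) * p (n + 1) + p n)
    (hsign : ∀ n, 0 < (-1 : ℝ) ^ n * ((q n : ℝ) * ρ - (p n : ℝ)))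
    (x0 : ℝ) (len : ℕ → ℕ → ℝ)
    (hlen : ∀ n i, len n i = |L^[q n + i] x0 - L^[i] x0 - (p n : ℝ)|) :
    ∃ C > 0, ∀ n m i j : ℕ, i ≤ j → j < i + q (n + 1) →
      C⁻¹ ≤ (len (n + m) j * len n i) / (len (n + m) i * len n j) ∧
        (len (n + m) j * len n i) / (len (n + m) i * len n j) ≤ C := by
  set F : CircleDeg1Lift := ⟨⟨L, hLmono.monotone⟩, hLper⟩
  have hτ : τ F = ρ :=
    F.translationNumber_eq_of_tendsto₀ (by simp only [sub_zero] at hrot; exact hrot)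
  subst hτ
  have hcv : IsConvergentSeq (τ F) k q p := ⟨hk, hq0, hq1, hqrec, hp0, hp1, hprec, hsign⟩
  obtain ⟨K, hK⟩ := exists_lipschitzWith_log_deriv hLper hderiv hderiv2 hdpos hα.1.le hH hHolder
  obtain rfl : len = F.fundArcLength q p x0 := by
    funext n i; simp [hlen, CircleDeg1Lift.fundArcLength, CircleDeg1Lift.coe_pow, F]
  refine ⟨exp (4 * K), exp_pos _, fun n m i j hij hj => ?_⟩
  obtain ⟨s, rfl⟩ := Nat.exists_eq_add_of_le hij
  have hdist := F.abs_log_fundArcLength_div_sub_le hirr hcv hderiv hdpos hK ((F ^ i) x0) n m s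
    (by omega)
  simp only [CircleDeg1Lift.fundArcLength_pow_apply, add_zero] at hdist
  have hpos := CircleDeg1Lift.fundArcLength_pos hcv x0
  rw [← Real.log_div (div_pos (hpos _ _) (hpos _ _)).ne' (div_pos (hpos _ _) (hpos _ _)).ne']
    at hdist
  convert inv_exp_le_and_le_exp_of_abs_log_le
    (div_pos (div_pos (hpos _ _) (hpos _ _)) (div_pos (hpos _ _) (hpos _ _))) hdist using 2 <;>
    field_simp

/-- Comparability of ratios of fundamental arc lengths along a trajectory within one
fundamental period, for a `C^{2+α}` circle diffeomorphism with irrational rotation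
number.  Here `|Δ^{(n)}_i| = |L^{q_n + i} x₀ - L^i x₀ - p n|`. -/
theorem arc_ratio_comparable
    (L dL ddL : ℝ → ℝ) (hLmono : StrictMono L)
    (hLper : ∀ x, L (x + 1) = L x + 1)
    (hderiv : ∀ x, HasDerivAt L (dL x) x)
    (hderiv2 : ∀ x, HasDerivAt dL (ddL x) x)
    (hdpos : ∀ x, 0 < dL x)
    (α H : ℝ) (hα : α ∈ Set.Ioc (0:ℝ) 1) (hH : 0 ≤ H)
    (hHolder : ∀ x y : ℝ, |ddL x - ddL y| ≤ H * |x - y| ^ α)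
    (ρ : ℝ) (hirr : Irrational ρ) (hρ : ρ ∈ Set.Ioo (0:ℝ) 1)
    (hrot : Tendsto (fun i : ℕ => (L^[i] 0 - 0) / i) atTop (nhds ρ))
    (k q : ℕ → ℕ) (p : ℕ → ℤ)
    (hk : ∀ n, 1 ≤ k n)
    (hq0 : q 0 = 1) (hq1 : q 1 = k 1)
    (hqrec : ∀ n, q (n + 2) = k (n + 2) * q (n + 1) + q n)
    (hp0 : p 0 = 0) (hp1 : p 1 = 1)
    (hprec : ∀ n, p (n + 2) = (k (n + 2) : ℤ) * p (n + 1) + p n)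
    (hsign : ∀ n, 0 < (-1 : ℝ) ^ n * ((q n : ℝ) * ρ - (p n : ℝ)))
    (x0 : ℝ) (len : ℕ → ℕ → ℝ)
    (hlen : ∀ n i, len n i = |L^[q n + i] x0 - L^[i] x0 - (p n : ℝ)|) :
    ∃ C > 0, ∀ n m i j : ℕ, i ≤ j → j < i + q (n + 1) →
      C⁻¹ ≤ (len (n + m) j * len n i) / (len (n + m) i * len n j) ∧
        (len (n + m) j * len n i) / (len (n + m) i * len n j) ≤ C :=
  arc_ratio_comparable_general L dL ddL hLmono hLper hderiv hderiv2 hdpos α H hα hH hHolder ρ hirr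
    hrot k q p hk hq0 hq1 hqrec hp0 hp1 hprec hsign x0 len hlen
end

section
/- Suppose ρ ∈ D_δ (so Δ_{n−1}^{1+δ} ≤ C Δ_n) with 0 < δ < α ≤ 1, Δ_n/Δ_{n−m} ≤ C λ^m for some λ ∈ (0,1), and define ε_n = Σ_{m=0}^{n} (Δ_n/Δ_{n−m}) Δ_{n−m−1}^α (with Δ_{−1} = 1). Then ε_n = O(Δ_n^{α/(1+δ)}). -/
/-!
Write `p = α / (1 + δ)`. The Diophantine bound gives `Δ_{n-m-1}^α ≤ (C Δ_{n-m})^p`, so the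
`m`-th term of `ε_n` is at most `(Δ_n / Δ_{n-m}) (C Δ_{n-m})^p = C^p Δ_n^p (Δ_n / Δ_{n-m})^{1-p}`.
Since `p ≤ 1`, exponential decay bounds the last factor by `(C λ^m)^{1-p}`, so `ε_n` is dominated
by `C Δ_n^p` times the geometric series of ratio `λ^{1-p} < 1`. In Lean, `Δ_n` is `D (n + 1)`.
-/

open Real Finset

theorem rpow_le_rpow_div_of_rpow_le {c y q α : ℝ} (hc : 0 ≤ c) (hq : 0 < q) (hα : 0 ≤ α)
    (h : c ^ q ≤ y) : c ^ α ≤ y ^ (α / q) := by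
  calc c ^ α = (c ^ q) ^ (α / q) := by rw [← rpow_mul hc, mul_div_cancel₀ α hq.ne']
    _ ≤ y ^ (α / q) := by gcongr

theorem div_mul_rpow_le_of_le_mul {a b C r p : ℝ} (ha : 0 < a) (hb : 0 < b) (hC : 0 < C)
    (hr : 0 ≤ r) (hp1 : p ≤ 1) (hab : a ≤ C * r * b) :
    a / b * (C * b) ^ p ≤ C * a ^ p * r ^ (1 - p) := by
  calc a / b * (C * b) ^ p = C ^ p * a ^ p * (a / b) ^ (1 - p) := by
        rw [mul_rpow hC.le hb.le, div_rpow ha.le hb.le, rpow_sub ha, rpow_sub hb, rpow_one,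
          rpow_one]
        field_simp
    _ ≤ C ^ p * a ^ p * (C * r) ^ (1 - p) := by
        gcongr
        rwa [div_le_iff₀ hb]
    _ = C * a ^ p * r ^ (1 - p) := by
        rw [mul_rpow hC.le hr, show C ^ p * a ^ p * (C ^ (1 - p) * r ^ (1 - p))
          = C ^ p * C ^ (1 - p) * a ^ p * r ^ (1 - p) by ring, ← rpow_add hC, add_sub_cancel,
          rpow_one]

theorem sum_range_le_mul_inv_one_sub {f : ℕ → ℝ} {A μ : ℝ} {N : ℕ} (hA : 0 ≤ A) (hμ0 : 0 ≤ μ)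
    (hμ1 : μ < 1) (hf : ∀ m < N, f m ≤ A * μ ^ m) : ∑ m ∈ range N, f m ≤ A * (1 - μ)⁻¹ := by
  have hgeom := geom_sum_Ico_le_of_lt_one (m := 0) (n := N) hμ0 hμ1
  rw [pow_zero, one_div, ← range_eq_Ico] at hgeom
  calc ∑ m ∈ range N, f m ≤ ∑ m ∈ range N, A * μ ^ m := sum_le_sum fun m hm ↦ hf m (mem_range.mp hm)
    _ = A * ∑ m ∈ range N, μ ^ m := (mul_sum _ _ _).symm
    _ ≤ A * (1 - μ)⁻¹ := mul_le_mul_of_nonneg_left hgeom hA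

theorem div_mul_rpow_le_geometric (D : ℕ → ℝ) {α δ C lam : ℝ} (hδ : 0 ≤ δ) (hα0 : 0 ≤ α)
    (hα : α ≤ 1 + δ) (hC : 0 < C) (hlam : 0 ≤ lam) (hpos : ∀ n, 0 < D n)
    (hDio : ∀ n, D n ^ ((1:ℝ) + δ) ≤ C * D (n + 1))
    (hexp : ∀ n m : ℕ, m ≤ n → D (n + 1) ≤ C * lam ^ m * D (n + 1 - m)) {n m : ℕ} (hmn : m ≤ n) :
    D (n + 1) / D (n + 1 - m) * D (n - m) ^ α
      ≤ C * D (n + 1) ^ (α / (1 + δ)) * (lam ^ (1 - α / (1 + δ))) ^ m := by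
  have hDio' : D (n - m) ^ (1 + δ) ≤ C * D (n + 1 - m) := by
    simpa [show n - m + 1 = n + 1 - m by omega] using hDio (n - m)
  calc D (n + 1) / D (n + 1 - m) * D (n - m) ^ α
      ≤ D (n + 1) / D (n + 1 - m) * (C * D (n + 1 - m)) ^ (α / (1 + δ)) :=
        mul_le_mul_of_nonneg_left
          (rpow_le_rpow_div_of_rpow_le (hpos _).le (by linarith) hα0 hDio')
          (div_pos (hpos _) (hpos _)).le
    _ ≤ C * D (n + 1) ^ (α / (1 + δ)) * (lam ^ m) ^ (1 - α / (1 + δ)) :=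
        div_mul_rpow_le_of_le_mul (hpos _) (hpos _) hC (by positivity)
          ((div_le_one (by linarith)).mpr hα) (hexp n m hmn)
    _ = C * D (n + 1) ^ (α / (1 + δ)) * (lam ^ (1 - α / (1 + δ))) ^ m := by
        rw [rpow_pow_comm hlam]

theorem epsilon_estimate_general
    (D : ℕ → ℝ) (α δ C lam : ℝ)
    (hδ : 0 < δ) (hδα : δ < α) (hα : α ≤ 1) (hC : 0 < C) (hlam : lam ∈ Set.Ioo (0:ℝ) 1)
    (hpos : ∀ n, 0 < D n)
    (hDio : ∀ n, D n ^ ((1:ℝ) + δ) ≤ C * D (n + 1))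
    (hexp : ∀ n m : ℕ, m ≤ n → D (n + 1) ≤ C * lam ^ m * D (n + 1 - m)) :
    ∃ K > 0, ∀ n,
      (∑ m ∈ Finset.range (n + 1), (D (n + 1) / D (n + 1 - m)) * D (n - m) ^ α)
        ≤ K * D (n + 1) ^ (α / (1 + δ)) := by
  obtain ⟨hlam0, hlam1⟩ := hlam
  have hp1 : α / (1 + δ) < 1 := (div_lt_one (by linarith)).mpr (by linarith)
  set μ := lam ^ (1 - α / (1 + δ))
  have hμ0 : 0 < μ := rpow_pos_of_pos hlam0 _
  have hμ1 : μ < 1 := rpow_lt_one hlam0.le hlam1 (by linarith)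
  refine ⟨C * (1 - μ)⁻¹, mul_pos hC (inv_pos.mpr (by linarith)), fun n => ?_⟩
  calc ∑ m ∈ range (n + 1), D (n + 1) / D (n + 1 - m) * D (n - m) ^ α
      ≤ C * D (n + 1) ^ (α / (1 + δ)) * (1 - μ)⁻¹ := by
        refine sum_range_le_mul_inv_one_sub (by have := hpos (n + 1); positivity) hμ0.le hμ1
          fun m hm ↦ ?_
        exact div_mul_rpow_le_geometric D hδ.le (hδ.trans hδα).le (by linarith) hC hlam0.le
          hpos hDio hexp (Nat.lt_succ_iff.mp hm)
    _ = C * (1 - μ)⁻¹ * D (n + 1) ^ (α / (1 + δ)) := by ring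

/-- Sequence-theoretic version of the lemma on `ε n`.  Here `D (n+1)` plays the role of
`Δ n` and `D 0 = 1` plays the role of `Δ₋₁`.  Under the Diophantine-type bound
`D n ^ (1+δ) ≤ C · D (n+1)` and the exponential decay `D (n+1) ≤ C λ^m D (n+1-m)`,
the quantity `ε n = Σ_{m=0}^{n} (Δ n / Δ (n-m)) Δ (n-m-1)^α` is `O(Δ n ^ (α/(1+δ)))`. -/
theorem epsilon_estimate
    (D : ℕ → ℝ) (α δ C lam : ℝ)
    (hδ : 0 < δ) (hδα : δ < α) (hα : α ≤ 1) (hC : 0 < C) (hlam : lam ∈ Set.Ioo (0:ℝ) 1)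
    (hpos : ∀ n, 0 < D n) (hD0 : D 0 = 1)
    (hdec : ∀ n, D (n + 1) < D n)
    (hDio : ∀ n, D n ^ ((1:ℝ) + δ) ≤ C * D (n + 1))
    (hexp : ∀ n m : ℕ, m ≤ n → D (n + 1) ≤ C * lam ^ m * D (n + 1 - m)) :
    ∃ K > 0, ∀ n,
      (∑ m ∈ Finset.range (n + 1), (D (n + 1) / D (n + 1 - m)) * D (n - m) ^ α)
        ≤ K * D (n + 1) ^ (α / (1 + δ)) :=
  epsilon_estimate_general D α δ C lam hδ hδα hα hC hlam hpos hDio hexp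
end
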